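/- For every τ ∈ (0,T], every x ∈ S^c(τ) and every integer N ≥ 1, there exists a sequence (y_n)_{n=0}^{⌊τ/h_N⌋} ∈ S^{c,#}_N(⌊τ/h_N⌋, β_N^#, δ_N) with ‖x(t_{N,n}) − y_n‖ ≤ δ_N for all 0 ≤ n ≤ ⌊τ/h_N⌋. -/

import Mathlib

/-!
The approximating sequence is `y n`, a point of `Δ N` within `δ_N` of `x (n h)`, so the initial
and state constraints are inherited from `x`. For the Euler step, `x ((n+1) h) - x (n h)` is `h`
times the mean of `ẋ` over `[n h, (n+1) h]`. By the Hausdorff-Lipschitz bound on `F`, `ẋ s` lies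
in the `(L h + L (P h + δ_N))`-thickening of the convex compact set `F (n h) (y n)`, hence so does
the mean. This needs the speed bound `‖ẋ‖ ≤ P`, which holds because by Grönwall's inequality `x`
stays within `R` of `X₀`.
-/

open MeasureTheory Metric Set Filter
open scoped RealInnerProductSpace

noncomputable section

/-- Euclidean space `ℝ^d`. -/
abbrev Euc (d : ℕ) : Type := EuclideanSpace ℝ (Fin d)

/-- `x` solves the differential inclusion `ẋ ∈ F(t,x)` on `[0,τ]`
with integrable derivative `v`. -/
def SolOn {d : ℕ} (F : ℝ → Euc d → Set (Euc d)) (τ : ℝ) (x v : ℝ → Euc d) : Prop :=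
  IntegrableOn v (Ioo (0:ℝ) τ) ∧
  (∀ t ∈ Icc (0:ℝ) τ, x t = x 0 + ∫ s in (0:ℝ)..t, v s) ∧
  (∀ᵐ s ∂(volume.restrict (Ioo (0:ℝ) τ)), v s ∈ F s (x s))

/-- the unconstrained solution set `S^u(τ)`. -/
def Su {d : ℕ} (F : ℝ → Euc d → Set (Euc d)) (X₀ : Set (Euc d)) (τ : ℝ) :
    Set (ℝ → Euc d) :=
  {x | x 0 ∈ X₀ ∧ ∃ v, SolOn F τ x v}

/-- the constrained solution set `S^c(τ)`. -/
def Sc {d : ℕ} (F : ℝ → Euc d → Set (Euc d)) (A : ℝ → Set (Euc d)) (X₀ : Set (Euc d))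
    (τ : ℝ) : Set (ℝ → Euc d) :=
  {x | x ∈ Su F X₀ τ ∧ ∀ t ∈ Icc (0:ℝ) τ, x t ∈ A t}

/-- the solution set `S^u_N(ν,β,δ)` of the (inflated, relaxed) Euler scheme. -/
def SuN {d : ℕ} (F : ℝ → Euc d → Set (Euc d)) (X₀ : Set (Euc d)) (T : ℝ) (N ν : ℕ)
    (β δ : ℝ) : Set (ℕ → Euc d) :=
  {y | infDist (y 0) X₀ ≤ δ ∧
    ∀ n < ν, ∃ v ∈ F ((n : ℝ) * (T / N)) (y n),
      ‖y (n + 1) - (y n + (T / N) • v)‖ ≤ β}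

/-- the constrained solution set `S^c_N(ν,β,δ)` of the Euler scheme. -/
def ScN {d : ℕ} (F : ℝ → Euc d → Set (Euc d)) (A : ℝ → Set (Euc d)) (X₀ : Set (Euc d))
    (T : ℝ) (N ν : ℕ) (β δ : ℝ) : Set (ℕ → Euc d) :=
  {y | y ∈ SuN F X₀ T N ν β δ ∧
    ∀ n ≤ ν, infDist (y n) (A ((n : ℝ) * (T / N))) ≤ δ}

/-- `M = sup {‖v‖ : x ∈ X₀, v ∈ F(0,x)}`. -/
def Mconst {d : ℕ} (F : ℝ → Euc d → Set (Euc d)) (X₀ : Set (Euc d)) : ℝ :=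
  sSup {r : ℝ | ∃ x ∈ X₀, ∃ v ∈ F 0 x, r = ‖v‖}

/-- distance of a point of `ℝ × ℝ^d × ℝ^d` (with norm `|r| + ‖x‖ + ‖v‖`) to the
graph `{(s,x,v) : s ∈ [0,T], v ∈ F(s,x)}` of `F`. -/
def graphDist {d : ℕ} (F : ℝ → Euc d → Set (Euc d)) (T : ℝ)
    (p : ℝ × Euc d × Euc d) : ℝ :=
  sInf {r : ℝ | ∃ s ∈ Icc (0:ℝ) T, ∃ x, ∃ v ∈ F s x,
    r = |p.1 - s| + ‖p.2.1 - x‖ + ‖p.2.2 - v‖}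

/-- `τ* = sup {τ ∈ (0,T] : S^c(τ) ≠ ∅}`. -/
def tauStar {d : ℕ} (F : ℝ → Euc d → Set (Euc d)) (A : ℝ → Set (Euc d))
    (X₀ : Set (Euc d)) (T : ℝ) : ℝ :=
  sSup {τ : ℝ | 0 < τ ∧ τ ≤ T ∧ (Sc F A X₀ τ).Nonempty}

theorem le_mul_exp_of_le_add_integral {φ : ℝ → ℝ} {c K τ : ℝ} (hφ : ContinuousOn φ (Icc 0 τ))
    (hK : 0 ≤ K) (h : ∀ t ∈ Icc 0 τ, φ t ≤ c + ∫ s in (0 : ℝ)..t, K * φ s) :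
    ∀ t ∈ Icc 0 τ, φ t ≤ c * Real.exp (K * t) := by
  intro t ht
  have hτ : 0 ≤ τ := ht.1.trans ht.2
  have hKφ : ContinuousOn (fun s => K * φ s) (Icc 0 τ) := continuousOn_const.mul hφ
  set U : ℝ → ℝ := fun t => c + ∫ s in (0 : ℝ)..t, K * φ s
  have hU : ContinuousOn U (Icc 0 τ) := by
    have := intervalIntegral.continuousOn_primitive_interval (μ := volume)
      (by rw [uIcc_of_le hτ]; exact hKφ.integrableOn_Icc)
    rw [uIcc_of_le hτ] at this
    exact continuousOn_const.add this
  have hU' : ∀ s ∈ Ico 0 τ, HasDerivWithinAt U (K * φ s) (Ici s) s := by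
    intro s hs
    have : Fact (s ∈ Icc 0 τ) := ⟨Ico_subset_Icc_self hs⟩
    refine (HasDerivWithinAt.const_add c ?_).mono_of_mem_nhdsWithin
      (mem_of_superset (Icc_mem_nhdsGE hs.2) (Icc_subset_Icc_left hs.1))
    refine intervalIntegral.integral_hasDerivWithinAt_right (t := Icc 0 τ)
      ((hKφ.mono ?_).intervalIntegrable)
      (hKφ.stronglyMeasurableAtFilter_nhdsWithin measurableSet_Icc s) (hKφ s this.out)
    rw [uIcc_of_le hs.1]
    exact Icc_subset_Icc_right hs.2.le
  have hUle := le_gronwallBound_of_liminf_deriv_right_le (δ := c) (K := K) (ε := 0) hU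
    (fun s hs r hr => (hU' s hs).liminf_right_slope_le hr) (by simp [U])
    (fun s hs => (add_zero (K * U s)).symm ▸
      mul_le_mul_of_nonneg_left (h s (Ico_subset_Icc_self hs)) hK)
    t ht
  simpa [gronwallBound_ε0] using (h t ht).trans hUle

theorem mem_cthickening_of_hausdorffDist_le {α : Type*} [PseudoMetricSpace α] {s t : Set α}
    {x : α} {r : ℝ} (hx : x ∈ s) (hs : Bornology.IsBounded s) (ht : t.Nonempty)
    (ht' : Bornology.IsBounded t) (hst : hausdorffDist s t ≤ r) : x ∈ cthickening r t := by
  have hfin := hausdorffEDist_ne_top_of_nonempty_of_bounded ⟨x, hx⟩ ht hs ht'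
  rw [mem_cthickening_iff]
  calc infEDist x t ≤ hausdorffEDist s t := infEDist_le_hausdorffEDist_of_mem hx
    _ = ENNReal.ofReal (hausdorffDist s t) := (ENNReal.ofReal_toReal hfin).symm
    _ ≤ ENNReal.ofReal r := ENNReal.ofReal_le_ofReal hst

theorem IsCompact.exists_dist_le_of_mem_cthickening {α : Type*} [PseudoMetricSpace α]
    {K : Set α} {x : α} {r : ℝ} (hK : IsCompact K) (hr : 0 ≤ r) (hx : x ∈ cthickening r K) :
    ∃ y ∈ K, dist x y ≤ r := by
  rw [hK.cthickening_eq_biUnion_closedBall hr] at hx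
  simpa only [mem_iUnion₂, mem_closedBall, exists_prop] using hx

theorem exists_mem_norm_integral_sub_smul_le {E : Type*} [NormedAddCommGroup E]
    [NormedSpace ℝ E] [CompleteSpace E] {K : Set E} {v : ℝ → E} {a b r : ℝ}
    (hKc : Convex ℝ K) (hK : IsCompact K) (hr : 0 ≤ r) (hab : a < b)
    (hv : IntegrableOn v (Ioc a b)) (hvK : ∀ᵐ s ∂volume.restrict (Ioc a b), v s ∈ cthickening r K) :
    ∃ w ∈ K, ‖(∫ s in a..b, v s) - (b - a) • w‖ ≤ (b - a) * r := by
  have hvol : volume (Ioc a b) ≠ 0 := by simpa using hab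
  have havg : ⨍ s in Ioc a b, v s ∈ cthickening r K :=
    (hKc.cthickening r).set_average_mem isClosed_cthickening hvol measure_Ioc_lt_top.ne hvK hv
  obtain ⟨w, hwK, hw⟩ := hK.exists_dist_le_of_mem_cthickening hr havg
  refine ⟨w, hwK, ?_⟩
  have hint : ∫ s in a..b, v s = (b - a) • ⨍ s in Ioc a b, v s := by
    rw [intervalIntegral.integral_of_le hab.le, setAverage_eq, Real.volume_real_Ioc_of_le hab.le,
      smul_inv_smul₀ (sub_pos.2 hab).ne']
  rw [hint, ← smul_sub, norm_smul, Real.norm_of_nonneg (sub_pos.2 hab).le, ← dist_eq_norm]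
  exact mul_le_mul_of_nonneg_left hw (sub_pos.2 hab).le

theorem mem_cthickening_of_hausdorffDist_lipschitz {d : ℕ} {T L : ℝ}
    {F : ℝ → Euc d → Set (Euc d)}
    (hFne : ∀ t ∈ Icc (0:ℝ) T, ∀ x : Euc d, (F t x).Nonempty)
    (hFcpt : ∀ t ∈ Icc (0:ℝ) T, ∀ x : Euc d, IsCompact (F t x))
    (hFlip : ∀ t ∈ Icc (0:ℝ) T, ∀ t' ∈ Icc (0:ℝ) T, ∀ x x' : Euc d,
      hausdorffDist (F t x) (F t' x') ≤ L * |t - t'| + L * ‖x - x'‖)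
    {t t' : ℝ} (ht : t ∈ Icc 0 T) (ht' : t' ∈ Icc 0 T) {y y' w : Euc d} (hw : w ∈ F t y) :
    w ∈ cthickening (L * |t - t'| + L * ‖y - y'‖) (F t' y') :=
  mem_cthickening_of_hausdorffDist_le hw (hFcpt t ht y).isBounded (hFne t' ht' y')
    (hFcpt t' ht' y').isBounded (hFlip t ht t' ht' y y')

theorem norm_le_Mconst {d : ℕ} {F : ℝ → Euc d → Set (Euc d)} {X₀ : Set (Euc d)} {P : ℝ}
    (hP : ∀ y ∈ X₀, ∀ u ∈ F 0 y, ‖u‖ ≤ P) {y w : Euc d} (hy : y ∈ X₀) (hw : w ∈ F 0 y) :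
    ‖w‖ ≤ Mconst F X₀ :=
  le_csSup ⟨P, by rintro r ⟨y, hy, u, hu, rfl⟩; exact hP y hy u hu⟩ ⟨y, hy, w, hw, rfl⟩

namespace SolOn

variable {d : ℕ} {F : ℝ → Euc d → Set (Euc d)} {T L P τ a b : ℝ} {x v : ℝ → Euc d}

theorem integrableOn_Icc (hx : SolOn F τ x v) : IntegrableOn v (Icc 0 τ) := by
  rw [IntegrableOn, ← Measure.restrict_congr_set Ioo_ae_eq_Icc]
  exact hx.1

theorem ae_mem_Icc (hx : SolOn F τ x v) :
    ∀ᵐ s ∂volume.restrict (Icc 0 τ), v s ∈ F s (x s) := by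
  rw [← Measure.restrict_congr_set Ioo_ae_eq_Icc]
  exact hx.2.2

theorem intervalIntegrable (hx : SolOn F τ x v) (ha : 0 ≤ a) (hab : a ≤ b) (hb : b ≤ τ) :
    IntervalIntegrable v volume a b := by
  rw [intervalIntegrable_iff_integrableOn_Icc_of_le hab]
  exact hx.integrableOn_Icc.mono_set (Icc_subset_Icc ha hb)

theorem sub_eq_integral (hx : SolOn F τ x v) (ha : 0 ≤ a) (hab : a ≤ b) (hb : b ≤ τ) :
    x b - x a = ∫ s in a..b, v s := by
  rw [hx.2.1 b ⟨ha.trans hab, hb⟩, hx.2.1 a ⟨ha, hab.trans hb⟩, add_sub_add_left_eq_sub,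
    intervalIntegral.integral_interval_sub_left (hx.intervalIntegrable le_rfl (ha.trans hab) hb)
      (hx.intervalIntegrable le_rfl ha (hab.trans hb))]

theorem norm_sub_le_of_ae_norm_le (hx : SolOn F τ x v) {M L : ℝ} (hL : 0 < L)
    (hv : ∀ᵐ s ∂volume.restrict (Icc 0 τ), ‖v s‖ ≤ M + L * s + L * ‖x s - x 0‖) :
    ∀ t ∈ Icc 0 τ, ‖x t - x 0‖ ≤ (Real.exp (L * t) - 1) * (M + 1) / L := by
  set g : ℝ → ℝ := fun t => ∫ s in (0 : ℝ)..t, ‖v s‖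
  -- with `c = (M + 1) / L` the bound `1 + ‖v s‖ ≤ 1 + M + L s + L g s` reads `≤ L (c + s + g s)`
  set c := (M + 1) / L
  have hxg : ∀ t ∈ Icc 0 τ, ‖x t - x 0‖ ≤ g t := fun t ht => by
    rw [hx.sub_eq_integral le_rfl ht.1 ht.2]
    exact intervalIntegral.norm_integral_le_integral_norm ht.1
  have hφ : ContinuousOn (fun t => c + t + g t) (Icc 0 τ) := by
    rcases le_or_gt 0 τ with hτ | hτ
    · have := intervalIntegral.continuousOn_primitive_interval (μ := volume)
        (by rw [uIcc_of_le hτ]; exact hx.integrableOn_Icc.norm)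
      rw [uIcc_of_le hτ] at this
      exact (continuousOn_const.add continuousOn_id).add this
    · simp [Icc_eq_empty_of_lt hτ]
  have hφle : ∀ t ∈ Icc 0 τ, c + t + g t ≤ c + ∫ s in (0 : ℝ)..t, L * (c + s + g s) := by
    intro t ht
    have hvt := hx.intervalIntegrable le_rfl ht.1 ht.2
    have hsum : t + g t = ∫ s in (0 : ℝ)..t, (1 + ‖v s‖) := by
      rw [intervalIntegral.integral_add intervalIntegrable_const hvt.norm]
      simp [g]
    rw [add_assoc, hsum, add_le_add_iff_left]
    refine intervalIntegral.integral_mono_ae_restrict ht.1 (intervalIntegrable_const.add hvt.norm)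
      ((continuousOn_const.mul (hφ.mono (Icc_subset_Icc_right ht.2))).intervalIntegrable_of_Icc
        ht.1) ?_
    filter_upwards [ae_restrict_of_ae_restrict_of_subset (Icc_subset_Icc_right ht.2) hv,
      ae_restrict_mem measurableSet_Icc] with s hvs hs
    have hLc : L * c = M + 1 := mul_div_cancel₀ _ hL.ne'
    have := mul_le_mul_of_nonneg_left (hxg s ⟨hs.1, hs.2.trans ht.2⟩) hL.le
    linear_combination hvs + this - hLc
  intro t ht
  have hexp := le_mul_exp_of_le_add_integral hφ hL.le hφle t ht
  have hc : c * Real.exp (L * t) - c = (Real.exp (L * t) - 1) * (M + 1) / L := by ring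
  linarith [hxg t ht, ht.1]

theorem norm_sub_le_mul (hx : SolOn F τ x v) (hvP : ∀ᵐ s ∂volume.restrict (Icc 0 τ), ‖v s‖ ≤ P)
    (ha : 0 ≤ a) (hab : a ≤ b) (hb : b ≤ τ) : ‖x b - x a‖ ≤ P * (b - a) := by
  rw [ae_restrict_iff' measurableSet_Icc] at hvP
  rw [hx.sub_eq_integral ha hab hb]
  refine (intervalIntegral.norm_integral_le_of_norm_le hab (g := fun _ => P) ?_
    intervalIntegrable_const).trans_eq (by simp [mul_comm])
  filter_upwards [hvP] with s hs hsab using hs ⟨ha.trans hsab.1.le, hsab.2.trans hb⟩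

theorem ae_norm_le_growth (hx : SolOn F τ x v) (hτT : τ ≤ T) (hL : 0 ≤ L)
    (hFne : ∀ t ∈ Icc (0:ℝ) T, ∀ x : Euc d, (F t x).Nonempty)
    (hFcpt : ∀ t ∈ Icc (0:ℝ) T, ∀ x : Euc d, IsCompact (F t x))
    (hFlip : ∀ t ∈ Icc (0:ℝ) T, ∀ t' ∈ Icc (0:ℝ) T, ∀ x x' : Euc d,
      hausdorffDist (F t x) (F t' x') ≤ L * |t - t'| + L * ‖x - x'‖)
    {M : ℝ} (hM : ∀ w ∈ F 0 (x 0), ‖w‖ ≤ M) :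
    ∀ᵐ s ∂volume.restrict (Icc 0 τ), ‖v s‖ ≤ M + L * s + L * ‖x s - x 0‖ := by
  filter_upwards [hx.ae_mem_Icc, ae_restrict_mem measurableSet_Icc] with s hv hs
  have h0T : (0 : ℝ) ∈ Icc 0 T := ⟨le_rfl, hs.1.trans (hs.2.trans hτT)⟩
  obtain ⟨w, hw, hvw⟩ := (hFcpt 0 h0T (x 0)).exists_dist_le_of_mem_cthickening (by positivity)
    (mem_cthickening_of_hausdorffDist_lipschitz hFne hFcpt hFlip ⟨hs.1, hs.2.trans hτT⟩ h0T hv)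
  rw [sub_zero, abs_of_nonneg hs.1] at hvw
  calc ‖v s‖ ≤ ‖w‖ + dist (v s) w := by rw [dist_eq_norm]; exact norm_le_norm_add_norm_sub' _ _
    _ ≤ M + L * s + L * ‖x s - x 0‖ := by linarith [hM w hw]

theorem ae_norm_le_of_apply_zero_mem (hx : SolOn F τ x v) {X₀ : Set (Euc d)} (hx0 : x 0 ∈ X₀)
    (hτT : τ ≤ T) (hL : 0 < L)
    (hFne : ∀ t ∈ Icc (0:ℝ) T, ∀ x : Euc d, (F t x).Nonempty)
    (hFcpt : ∀ t ∈ Icc (0:ℝ) T, ∀ x : Euc d, IsCompact (F t x))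
    (hFlip : ∀ t ∈ Icc (0:ℝ) T, ∀ t' ∈ Icc (0:ℝ) T, ∀ x x' : Euc d,
      hausdorffDist (F t x) (F t' x') ≤ L * |t - t'| + L * ‖x - x'‖)
    {R : ℝ} (hR : 0 ≤ R)
    (hPbd : ∀ t ∈ Icc (0:ℝ) T, ∀ y : Euc d, infDist y X₀ ≤ R → ∀ v ∈ F t y, ‖v‖ ≤ P)
    (hR1 : (Real.exp (L * T) - 1) * (Mconst F X₀ + 1) / L ≤ R) :
    ∀ᵐ s ∂volume.restrict (Icc 0 τ), ‖v s‖ ≤ P := by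
  filter_upwards [hx.ae_mem_Icc, ae_restrict_mem measurableSet_Icc] with s hv hs
  have h0T : (0 : ℝ) ∈ Icc 0 T := ⟨le_rfl, hs.1.trans (hs.2.trans hτT)⟩
  have hM : ∀ w ∈ F 0 (x 0), ‖w‖ ≤ Mconst F X₀ := fun w hw =>
    norm_le_Mconst (fun y hy u hu => hPbd 0 h0T y ((infDist_zero_of_mem hy).trans_le hR) u hu)
      hx0 hw
  have hM0 : 0 ≤ Mconst F X₀ := (norm_nonneg _).trans (hM _ (hFne 0 h0T (x 0)).some_mem)
  have hgrowth :=
    hx.norm_sub_le_of_ae_norm_le hL (hx.ae_norm_le_growth hτT hL.le hFne hFcpt hFlip hM)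
  refine hPbd s ⟨hs.1, hs.2.trans hτT⟩ (x s) ?_ (v s) hv
  calc infDist (x s) X₀ ≤ ‖x s - x 0‖ := by
        rw [← dist_eq_norm]; exact infDist_le_dist_of_mem hx0
    _ ≤ (Real.exp (L * s) - 1) * (Mconst F X₀ + 1) / L := hgrowth s hs
    _ ≤ (Real.exp (L * T) - 1) * (Mconst F X₀ + 1) / L := by
        gcongr; exact hs.2.trans hτT
    _ ≤ R := hR1

theorem exists_euler_step (hx : SolOn F τ x v) (hτT : τ ≤ T) (hL : 0 ≤ L) (hP : 0 ≤ P)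
    (hFne : ∀ t ∈ Icc (0:ℝ) T, ∀ x : Euc d, (F t x).Nonempty)
    (hFcvx : ∀ t ∈ Icc (0:ℝ) T, ∀ x : Euc d, Convex ℝ (F t x))
    (hFcpt : ∀ t ∈ Icc (0:ℝ) T, ∀ x : Euc d, IsCompact (F t x))
    (hFlip : ∀ t ∈ Icc (0:ℝ) T, ∀ t' ∈ Icc (0:ℝ) T, ∀ x x' : Euc d,
      hausdorffDist (F t x) (F t' x') ≤ L * |t - t'| + L * ‖x - x'‖)
    (hvP : ∀ᵐ s ∂volume.restrict (Icc 0 τ), ‖v s‖ ≤ P)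
    {a h δ : ℝ} {y y' : Euc d} (ha : 0 ≤ a) (hh : 0 < h) (hah : a + h ≤ τ)
    (hy : ‖x a - y‖ ≤ δ) (hy' : ‖x (a + h) - y'‖ ≤ δ) :
    ∃ w ∈ F a y, ‖y' - (y + h • w)‖ ≤ L * (P + 1) * h ^ 2 + (2 + L * h) * δ := by
  have haT : a ∈ Icc 0 T := ⟨ha, by linarith⟩
  have hδ : 0 ≤ δ := (norm_nonneg _).trans hy
  have hsub : Ioc a (a + h) ⊆ Icc 0 τ := Ioc_subset_Icc_self.trans (Icc_subset_Icc ha hah)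
  have hvK : ∀ᵐ s ∂volume.restrict (Ioc a (a + h)),
      v s ∈ cthickening (L * h + L * (P * h + δ)) (F a y) := by
    filter_upwards [ae_restrict_of_ae_restrict_of_subset hsub hx.ae_mem_Icc,
      ae_restrict_mem measurableSet_Ioc] with s hv hs
    have hsT : s ∈ Icc 0 T := ⟨(hsub hs).1, (hsub hs).2.trans hτT⟩
    refine cthickening_mono ?_ _
      (mem_cthickening_of_hausdorffDist_lipschitz hFne hFcpt hFlip hsT haT hv)
    have hsa : |s - a| ≤ h := by rw [abs_of_pos (sub_pos.2 hs.1)]; linarith [hs.2]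
    have hxy : ‖x s - y‖ ≤ P * h + δ :=
      calc ‖x s - y‖ ≤ ‖x s - x a‖ + ‖x a - y‖ := norm_sub_le_norm_sub_add_norm_sub _ _ _
        _ ≤ P * (s - a) + δ := add_le_add (hx.norm_sub_le_mul hvP ha hs.1.le (hsub hs).2) hy
        _ ≤ P * h + δ := by gcongr; linarith [hs.2]
    gcongr
  obtain ⟨w, hw, hwle⟩ := exists_mem_norm_integral_sub_smul_le (hFcvx a haT y) (hFcpt a haT y)
    (by positivity) (lt_add_of_pos_right a hh)
    ((hx.integrableOn_Icc).mono_set hsub) hvK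
  rw [← hx.sub_eq_integral ha (le_add_of_nonneg_right hh.le) hah, add_sub_cancel_left] at hwle
  refine ⟨w, hw, ?_⟩
  calc ‖y' - (y + h • w)‖ = ‖(x (a + h) - x a - h • w) - (x (a + h) - y') + (x a - y)‖ := by
        congr 1; abel
    _ ≤ ‖x (a + h) - x a - h • w‖ + ‖x (a + h) - y'‖ + ‖x a - y‖ :=
        (norm_add_le _ _).trans (add_le_add_left (norm_sub_le _ _) _)
    _ ≤ h * (L * h + L * (P * h + δ)) + δ + δ := by gcongr
    _ = L * (P + 1) * h ^ 2 + (2 + L * h) * δ := by ring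

end SolOn

theorem infDist_le_of_norm_sub_le {E : Type*} [SeminormedAddCommGroup E] {s : Set E} {x y : E}
    {r : ℝ} (hx : x ∈ s) (hxy : ‖x - y‖ ≤ r) : infDist y s ≤ r :=
  (infDist_le_dist_of_mem hx).trans (by rwa [dist_comm, dist_eq_norm])

theorem statement_9_general
    (d : ℕ) (T L : ℝ) (hT : 0 < T) (hL : 0 < L)
    (F : ℝ → Euc d → Set (Euc d))
    (hFne : ∀ t ∈ Icc (0:ℝ) T, ∀ x : Euc d, (F t x).Nonempty)
    (hFcvx : ∀ t ∈ Icc (0:ℝ) T, ∀ x : Euc d, Convex ℝ (F t x))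
    (hFcpt : ∀ t ∈ Icc (0:ℝ) T, ∀ x : Euc d, IsCompact (F t x))
    (hFlip : ∀ t ∈ Icc (0:ℝ) T, ∀ t' ∈ Icc (0:ℝ) T, ∀ x x' : Euc d,
      hausdorffDist (F t x) (F t' x') ≤ L * |t - t'| + L * ‖x - x'‖)
    (A : ℝ → Set (Euc d))
    (X₀ : Set (Euc d))
    (δseq : ℕ → ℝ)
    (Δ : ℕ → Set (Euc d))
    (hΔ : ∀ N, 1 ≤ N → ∀ x : Euc d, ∃ y ∈ Δ N, ‖x - y‖ ≤ δseq N)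
    (R P : ℝ) (hR : 0 < R) (hP : 0 < P)
    (hPbd : ∀ t ∈ Icc (0:ℝ) T, ∀ y : Euc d, infDist y X₀ ≤ R →
      ∀ v ∈ F t y, ‖v‖ ≤ P)
    (hR1 : (Real.exp (L * T) - 1) * (Mconst F X₀ + 1) / L ≤ R)
     :
    ∀ τ : ℝ, 0 < τ → τ ≤ T → ∀ x ∈ Sc F A X₀ τ, ∀ N : ℕ, 1 ≤ N →
      ∃ y : ℕ → Euc d,
        (y ∈ ScN F A X₀ T N ⌊τ / (T / N)⌋₊
            (L * (P + 1) * (T / N) ^ 2 + (2 + L * (T / N)) * δseq N) (δseq N) ∧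
          ∀ n : ℕ, n ≤ ⌊τ / (T / N)⌋₊ → y n ∈ Δ N) ∧
        ∀ n : ℕ, n ≤ ⌊τ / (T / N)⌋₊ →
          ‖x ((n : ℝ) * (T / N)) - y n‖ ≤ δseq N := by
  intro τ hτ hτT x ⟨⟨hx0, v, hx⟩, hxA⟩ N hN
  have hh : 0 < T / N := div_pos hT (Nat.cast_pos.2 hN)
  have hmem : ∀ n ≤ ⌊τ / (T / N)⌋₊, (n : ℝ) * (T / N) ∈ Icc 0 τ := fun n hn =>
    ⟨by positivity, (le_div_iff₀ hh).1 ((Nat.le_floor_iff (by positivity)).1 hn)⟩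
  have hvP := hx.ae_norm_le_of_apply_zero_mem hx0 hτT hL hFne hFcpt hFlip hR.le hPbd hR1
  choose z hzΔ hz using hΔ N hN
  refine ⟨fun n => z (x (n * (T / N))), ⟨⟨⟨?_, fun n hn => ?_⟩, fun n hn => ?_⟩,
    fun n _ => hzΔ _⟩, fun n _ => hz _⟩
  · simpa using infDist_le_of_norm_sub_le hx0 (hz (x 0))
  · have hstep := (hmem (n + 1) hn).2
    rw [Nat.cast_succ, add_one_mul] at hstep
    simp only [Nat.cast_succ, add_one_mul]
    exact hx.exists_euler_step hτT hL.le hP.le hFne hFcvx hFcpt hFlip hvP (by positivity) hh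
      hstep (hz _) (hz _)
  · exact infDist_le_of_norm_sub_le (hxA _ (hmem n hn)) (hz _)

theorem statement_9
    (d : ℕ) (hd : 1 ≤ d) (T L : ℝ) (hT : 0 < T) (hL : 0 < L)
    (F : ℝ → Euc d → Set (Euc d))
    (hFne : ∀ t ∈ Icc (0:ℝ) T, ∀ x : Euc d, (F t x).Nonempty)
    (hFcvx : ∀ t ∈ Icc (0:ℝ) T, ∀ x : Euc d, Convex ℝ (F t x))
    (hFcpt : ∀ t ∈ Icc (0:ℝ) T, ∀ x : Euc d, IsCompact (F t x))
    (hFlip : ∀ t ∈ Icc (0:ℝ) T, ∀ t' ∈ Icc (0:ℝ) T, ∀ x x' : Euc d,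
      hausdorffDist (F t x) (F t' x') ≤ L * |t - t'| + L * ‖x - x'‖)
    (A : ℝ → Set (Euc d))
    (hAcl : ∀ t ∈ Icc (0:ℝ) T, IsClosed (A t))
    (hAusc : ∀ (ts : ℕ → ℝ) (t : ℝ) (xs : ℕ → Euc d) (xx : Euc d),
      (∀ n, ts n ∈ Icc (0:ℝ) T) → Tendsto ts atTop (nhds t) →
      (∀ n, xs n ∈ A (ts n)) → Tendsto xs atTop (nhds xx) → xx ∈ A t)
    (X₀ : Set (Euc d)) (hX₀ne : X₀.Nonempty) (hX₀cpt : IsCompact X₀)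
    (δseq : ℕ → ℝ) (hδpos : ∀ N, 1 ≤ N → 0 < δseq N)
    (hδ : Tendsto (fun N : ℕ => δseq N / (T / N)) atTop (nhds 0))
    (Δ : ℕ → Set (Euc d))
    (hΔ : ∀ N, 1 ≤ N → ∀ x : Euc d, ∃ y ∈ Δ N, ‖x - y‖ ≤ δseq N)
    (R P : ℝ) (hR : 0 < R) (hP : 0 < P)
    (hPbd : ∀ t ∈ Icc (0:ℝ) T, ∀ y : Euc d, infDist y X₀ ≤ R →
      ∀ v ∈ F t y, ‖v‖ ≤ P)
    (hR1 : (Real.exp (L * T) - 1) * (Mconst F X₀ + 1) / L ≤ R)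
    (hR2 : Real.exp (L * T) *
      (sSup {r : ℝ | ∃ N, 1 ≤ N ∧ r = δseq N} + (P + 1) * T +
        (2 + L * T) * sSup {r : ℝ | ∃ N, 1 ≤ N ∧ r = δseq N / (T / N)} / L +
        Mconst F X₀ / L + 1) ≤ R)
     :
    ∀ τ : ℝ, 0 < τ → τ ≤ T → ∀ x ∈ Sc F A X₀ τ, ∀ N : ℕ, 1 ≤ N →
      ∃ y : ℕ → Euc d,
        (y ∈ ScN F A X₀ T N ⌊τ / (T / N)⌋₊
            (L * (P + 1) * (T / N) ^ 2 + (2 + L * (T / N)) * δseq N) (δseq N) ∧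
          ∀ n : ℕ, n ≤ ⌊τ / (T / N)⌋₊ → y n ∈ Δ N) ∧
        ∀ n : ℕ, n ≤ ⌊τ / (T / N)⌋₊ →
          ‖x ((n : ℝ) * (T / N)) - y n‖ ≤ δseq N :=
  statement_9_general d T L hT hL F hFne hFcvx hFcpt hFlip A X₀ δseq Δ hΔ R P hR hP hPbd hR1
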